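/- Let μ₀ be an absolutely continuous probability measure on ℝ² with density f satisfying f(x₁,x₂) = f(x₂,x₁) for all (x₁,x₂) (symmetry about the line x₁ = x₂), and with finite second moment. Let θ = (θ₁,θ₂) and θ' = (θ'₁,θ'₂) have strictly positive entries, and let μ_θ, μ_{θ'} be the dilations of μ₀ by θ and θ'. Then W₂(μ_θ, μ_{θ'})² = [(θ₁ − θ'₁)² + (θ₂ − θ'₂)²] · ∫_{{x₂ ≥ x₁}} (x₁² + x₂²) f(x) dx. -/

import Mathlib

/-! The coupling `x ↦ (θ x, θ' x)` of the two dilations is optimal, with cost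
`∑ᵢ (θᵢ - θ'ᵢ)² ∫ xᵢ² dμ₀`. Indeed, for `s = θᵢ`, `t = θ'ᵢ` the pointwise inequality
`a² + b² ≤ (a - b)² + (t / s) a² + (s / t) b²`, i.e. `(t a - s b)² ≥ 0`, integrates against any
coupling to exactly that lower bound, since the marginals fix `∫ a²` and `∫ b²`. For a density
symmetric under `x₁ ↔ x₂` the two coordinate second moments agree, and each equals
`∫_{x₁ ≤ x₂} |x|² f`: the swap exchanges the two half-planes and the diagonal is Lebesgue-null. -/

open MeasureTheory Filter Set
open scoped ENNReal NNReal

noncomputable section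

/-- The 2-Wasserstein distance between two measures on `ℝ^m`, defined as the infimum
over all couplings (probability measures on the product whose marginals are `μ` and `ν`)
of the square root of the quadratic transport cost. -/
noncomputable def W2 {m : ℕ} (μ ν : Measure (EuclideanSpace ℝ (Fin m))) : ℝ≥0∞ :=
  ⨅ (γ : Measure (EuclideanSpace ℝ (Fin m) × EuclideanSpace ℝ (Fin m)))
    (_ : IsProbabilityMeasure γ) (_ : γ.map Prod.fst = μ) (_ : γ.map Prod.snd = ν),
    (∫⁻ p, ENNReal.ofReal (‖p.1 - p.2‖ ^ 2) ∂γ) ^ (1 / 2 : ℝ)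

/-- A measure has finite second moment if `∫ |x|² dμ < ∞`. -/
def FiniteSecondMoment {m : ℕ} (μ : Measure (EuclideanSpace ℝ (Fin m))) : Prop :=
  ∫⁻ x, ENNReal.ofReal (‖x‖ ^ 2) ∂μ ≠ ⊤

/-- The dilation of a measure `μ` by `θ ∈ ℝ^m_+`: the pushforward of `μ` under the linear
map `x ↦ (θ₁x₁, …, θ_m x_m)`. -/
noncomputable def dilate {m : ℕ} (θ : Fin m → ℝ)
    (μ : Measure (EuclideanSpace ℝ (Fin m))) : Measure (EuclideanSpace ℝ (Fin m)) :=
  μ.map (fun x => WithLp.toLp 2 (fun i => θ i * x i))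

lemma sq_add_sq_le_sq_sub_add {s t : ℝ} (hs : 0 < s) (ht : 0 < t) (a b : ℝ) :
    a ^ 2 + b ^ 2 ≤ (a - b) ^ 2 + (t / s * a ^ 2 + s / t * b ^ 2) := by
  have key : t / s * a ^ 2 + s / t * b ^ 2 - 2 * (a * b) = (t * a - s * b) ^ 2 / (s * t) := by
    field_simp; ring
  nlinarith [div_nonneg (sq_nonneg (t * a - s * b)) (mul_pos hs ht).le]

lemma ofReal_sq_sub_mul_le_lintegral_sq_sub {Ω : Type*} [MeasurableSpace Ω] {γ : Measure Ω}
    {u v : Ω → ℝ} (hu : Measurable u) (hv : Measurable v) {s t : ℝ} (hs : 0 < s) (ht : 0 < t)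
    {M : ℝ≥0∞} (hM : M ≠ ⊤) (hu2 : ∫⁻ ω, ENNReal.ofReal (u ω ^ 2) ∂γ = ENNReal.ofReal (s ^ 2) * M)
    (hv2 : ∫⁻ ω, ENNReal.ofReal (v ω ^ 2) ∂γ = ENNReal.ofReal (t ^ 2) * M) :
    ENNReal.ofReal ((s - t) ^ 2) * M ≤ ∫⁻ ω, ENNReal.ofReal ((u ω - v ω) ^ 2) ∂γ := by
  have hpt : ∀ ω, ENNReal.ofReal (u ω ^ 2) + ENNReal.ofReal (v ω ^ 2) ≤
      ENNReal.ofReal ((u ω - v ω) ^ 2) + (ENNReal.ofReal (t / s) * ENNReal.ofReal (u ω ^ 2) +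
        ENNReal.ofReal (s / t) * ENNReal.ofReal (v ω ^ 2)) := fun ω => by
    rw [← ENNReal.ofReal_mul (by positivity), ← ENNReal.ofReal_mul (by positivity),
      ← ENNReal.ofReal_add (by positivity) (by positivity),
      ← ENNReal.ofReal_add (by positivity) (by positivity),
      ← ENNReal.ofReal_add (by positivity) (by positivity)]
    exact ENNReal.ofReal_le_ofReal (sq_add_sq_le_sq_sub_add hs ht _ _)
  have hcross : ENNReal.ofReal (t / s) * (ENNReal.ofReal (s ^ 2) * M) +
      ENNReal.ofReal (s / t) * (ENNReal.ofReal (t ^ 2) * M) = ENNReal.ofReal (2 * s * t) * M := by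
    rw [← mul_assoc, ← mul_assoc, ← ENNReal.ofReal_mul (by positivity),
      ← ENNReal.ofReal_mul (by positivity), ← add_mul,
      ← ENNReal.ofReal_add (by positivity) (by positivity)]
    congr 2
    field_simp
    ring
  have hsplit : ENNReal.ofReal (s ^ 2) * M + ENNReal.ofReal (t ^ 2) * M =
      ENNReal.ofReal ((s - t) ^ 2) * M + ENNReal.ofReal (2 * s * t) * M := by
    rw [← add_mul, ← add_mul, ← ENNReal.ofReal_add (by positivity) (by positivity),
      ← ENNReal.ofReal_add (by positivity) (by positivity)]
    congr 2
    ring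
  -- cancelling the cross term `2 s t M` from both sides needs `M ≠ ⊤`
  refine (ENNReal.add_le_add_iff_right
    (ENNReal.mul_ne_top (ENNReal.ofReal_ne_top (r := 2 * s * t)) hM)).1 ?_
  calc ENNReal.ofReal ((s - t) ^ 2) * M + ENNReal.ofReal (2 * s * t) * M
      = ∫⁻ ω, (ENNReal.ofReal (u ω ^ 2) + ENNReal.ofReal (v ω ^ 2)) ∂γ := by
        rw [lintegral_add_left (by fun_prop), hu2, hv2, hsplit]
    _ ≤ ∫⁻ ω, (ENNReal.ofReal ((u ω - v ω) ^ 2) + (ENNReal.ofReal (t / s) *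
          ENNReal.ofReal (u ω ^ 2) + ENNReal.ofReal (s / t) * ENNReal.ofReal (v ω ^ 2))) ∂γ :=
        lintegral_mono hpt
    _ = ∫⁻ ω, ENNReal.ofReal ((u ω - v ω) ^ 2) ∂γ + ENNReal.ofReal (2 * s * t) * M := by
        rw [lintegral_add_left (by fun_prop), lintegral_add_left (by fun_prop),
          lintegral_const_mul _ (by fun_prop), lintegral_const_mul _ (by fun_prop), hu2, hv2,
          hcross]

lemma MeasureTheory.MeasurePreserving.withDensity_comp {α β : Type*} [MeasurableSpace α]
    [MeasurableSpace β]
    {μ : Measure α} {ν : Measure β} {e : α → β} (he : MeasurePreserving e μ ν) {g : β → ℝ≥0∞}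
    (hg : Measurable g) : MeasurePreserving e (μ.withDensity (g ∘ e)) (ν.withDensity g) := by
  refine ⟨he.measurable, Measure.ext fun s hs => ?_⟩
  rw [Measure.map_apply he.measurable hs, withDensity_apply _ (he.measurable hs),
    withDensity_apply _ hs, ← he.setLIntegral_comp_preimage hs hg]
  rfl

lemma ofReal_setIntegral_mul_eq_setLIntegral_withDensity {α : Type*} [MeasurableSpace α]
    {μ : Measure α} {f g : α → ℝ} (hf : Measurable f) (hf0 : ∀ x, 0 ≤ f x) (hg : Measurable g)
    (hg0 : ∀ x, 0 ≤ g x) {s : Set α} (hs : MeasurableSet s)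
    (hfin : ∫⁻ x in s, ENNReal.ofReal (g x) ∂(μ.withDensity fun x => ENNReal.ofReal (f x)) ≠ ⊤) :
    ENNReal.ofReal (∫ x in s, g x * f x ∂μ) =
      ∫⁻ x in s, ENNReal.ofReal (g x) ∂(μ.withDensity fun x => ENNReal.ofReal (f x)) := by
  rw [setLIntegral_withDensity_eq_setLIntegral_mul _ (by fun_prop) (by fun_prop) hs] at hfin ⊢
  simp_rw [Pi.mul_apply, ← ENNReal.ofReal_mul (hf0 _), mul_comm (f _)] at hfin ⊢
  rw [integral_eq_lintegral_of_nonneg_ae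
    (Eventually.of_forall fun x => mul_nonneg (hg0 x) (hf0 x)) (by fun_prop),
    ENNReal.ofReal_toReal hfin]

section Dilation

variable {m : ℕ}

def dilation (θ : Fin m → ℝ) (x : EuclideanSpace ℝ (Fin m)) : EuclideanSpace ℝ (Fin m) :=
  WithLp.toLp 2 (fun i => θ i * x i)

@[simp]
lemma dilation_apply (θ : Fin m → ℝ) (x : EuclideanSpace ℝ (Fin m)) (i : Fin m) :
    dilation θ x i = θ i * x i := rfl

@[fun_prop]
lemma measurable_dilation (θ : Fin m → ℝ) : Measurable (dilation θ) := by
  unfold dilation; fun_prop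

lemma dilate_eq_map_dilation (θ : Fin m → ℝ) (μ : Measure (EuclideanSpace ℝ (Fin m))) :
    dilate θ μ = μ.map (dilation θ) := rfl

lemma lintegral_sq_apply_dilate (θ : Fin m → ℝ) (μ : Measure (EuclideanSpace ℝ (Fin m)))
    (i : Fin m) :
    ∫⁻ x, ENNReal.ofReal (x i ^ 2) ∂(dilate θ μ) =
      ENNReal.ofReal (θ i ^ 2) * ∫⁻ x, ENNReal.ofReal (x i ^ 2) ∂μ := by
  rw [dilate_eq_map_dilation, lintegral_map (by fun_prop) (by fun_prop),
    ← lintegral_const_mul _ (by fun_prop)]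
  simp_rw [dilation_apply, mul_pow, ENNReal.ofReal_mul (sq_nonneg _)]

lemma FiniteSecondMoment.lintegral_sq_apply_ne_top {μ : Measure (EuclideanSpace ℝ (Fin m))}
    (hμ : FiniteSecondMoment μ) (i : Fin m) : ∫⁻ x, ENNReal.ofReal (x i ^ 2) ∂μ ≠ ⊤ := by
  refine ne_top_of_le_ne_top hμ (lintegral_mono fun x => ENNReal.ofReal_le_ofReal ?_)
  simpa [sq_abs] using pow_le_pow_left₀ (norm_nonneg _) (PiLp.norm_apply_le x i) 2

def sqTransportCost (γ : Measure (EuclideanSpace ℝ (Fin m) × EuclideanSpace ℝ (Fin m))) :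
    ℝ≥0∞ :=
  ∫⁻ p, ENNReal.ofReal (‖p.1 - p.2‖ ^ 2) ∂γ

lemma sqTransportCost_eq_sum
    (γ : Measure (EuclideanSpace ℝ (Fin m) × EuclideanSpace ℝ (Fin m))) :
    sqTransportCost γ = ∑ i, ∫⁻ p, ENNReal.ofReal ((p.1 i - p.2 i) ^ 2) ∂γ := by
  rw [sqTransportCost, ← lintegral_finsetSum _ fun i _ => by fun_prop]
  simp_rw [EuclideanSpace.real_norm_sq_eq, PiLp.sub_apply,
    ENNReal.ofReal_sum_of_nonneg fun i _ => sq_nonneg _]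

lemma W2_sq_eq_sqTransportCost_of_forall_le {μ ν : Measure (EuclideanSpace ℝ (Fin m))}
    (γ₀ : Measure (EuclideanSpace ℝ (Fin m) × EuclideanSpace ℝ (Fin m)))
    [IsProbabilityMeasure γ₀] (h₁ : γ₀.map Prod.fst = μ) (h₂ : γ₀.map Prod.snd = ν)
    (hopt : ∀ γ, IsProbabilityMeasure γ → γ.map Prod.fst = μ → γ.map Prod.snd = ν →
      sqTransportCost γ₀ ≤ sqTransportCost γ) :
    W2 μ ν ^ 2 = sqTransportCost γ₀ := by
  have hW : W2 μ ν = sqTransportCost γ₀ ^ (1 / 2 : ℝ) := by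
    refine le_antisymm (iInf₂_le_of_le γ₀ ‹_› (iInf₂_le_of_le h₁ h₂ le_rfl)) ?_
    refine le_iInf₂ fun γ hγ => le_iInf₂ fun hγ₁ hγ₂ => ?_
    exact ENNReal.rpow_le_rpow (hopt γ hγ hγ₁ hγ₂) (by norm_num)
  rw [hW, ← ENNReal.rpow_natCast, ← ENNReal.rpow_mul]
  norm_num

lemma sqTransportCost_map_dilation_prod (θ θ' : Fin m → ℝ)
    (μ : Measure (EuclideanSpace ℝ (Fin m))) :
    sqTransportCost (μ.map fun x => (dilation θ x, dilation θ' x)) =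
      ∑ i, ENNReal.ofReal ((θ i - θ' i) ^ 2) * ∫⁻ x, ENNReal.ofReal (x i ^ 2) ∂μ := by
  rw [sqTransportCost_eq_sum]
  refine Finset.sum_congr rfl fun i _ => ?_
  rw [lintegral_map (by fun_prop) (by fun_prop), ← lintegral_const_mul _ (by fun_prop)]
  simp_rw [dilation_apply, ← sub_mul, mul_pow, ENNReal.ofReal_mul (sq_nonneg _)]

lemma W2_dilate_sq_eq_sum (μ : Measure (EuclideanSpace ℝ (Fin m))) [IsProbabilityMeasure μ]
    (hμ : FiniteSecondMoment μ) (θ θ' : Fin m → ℝ) (hθ : ∀ i, 0 < θ i) (hθ' : ∀ i, 0 < θ' i) :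
    W2 (dilate θ μ) (dilate θ' μ) ^ 2 =
      ∑ i, ENNReal.ofReal ((θ i - θ' i) ^ 2) * ∫⁻ x, ENNReal.ofReal (x i ^ 2) ∂μ := by
  have hγ₀ : IsProbabilityMeasure (μ.map fun x => (dilation θ x, dilation θ' x)) :=
    Measure.isProbabilityMeasure_map (by fun_prop)
  rw [← sqTransportCost_map_dilation_prod]
  refine W2_sq_eq_sqTransportCost_of_forall_le _ ?_ ?_ fun γ _ h₁ h₂ => ?_
  · rw [Measure.map_map (by fun_prop) (by fun_prop)]; rfl
  · rw [Measure.map_map (by fun_prop) (by fun_prop)]; rfl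
  rw [sqTransportCost_map_dilation_prod, sqTransportCost_eq_sum]
  refine Finset.sum_le_sum fun i _ => ofReal_sq_sub_mul_le_lintegral_sq_sub (by fun_prop)
    (by fun_prop) (hθ i) (hθ' i) (hμ.lintegral_sq_apply_ne_top i) ?_ ?_
  · rw [← lintegral_sq_apply_dilate, ← h₁, lintegral_map (by fun_prop) measurable_fst]
  · rw [← lintegral_sq_apply_dilate, ← h₂, lintegral_map (by fun_prop) measurable_snd]

end Dilation

section Plane

def swapCoords : EuclideanSpace ℝ (Fin 2) ≃ₗᵢ[ℝ] EuclideanSpace ℝ (Fin 2) :=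
  LinearIsometryEquiv.piLpCongrLeft 2 ℝ ℝ (Equiv.swap 0 1)

@[simp]
lemma swapCoords_apply_zero (x : EuclideanSpace ℝ (Fin 2)) : swapCoords x 0 = x 1 := by
  simp [swapCoords, LinearIsometryEquiv.piLpCongrLeft_apply, Equiv.piCongrLeft'_apply]

@[simp]
lemma swapCoords_apply_one (x : EuclideanSpace ℝ (Fin 2)) : swapCoords x 1 = x 0 := by
  simp [swapCoords, LinearIsometryEquiv.piLpCongrLeft_apply, Equiv.piCongrLeft'_apply]

lemma swapCoords_eq_toLp (x : EuclideanSpace ℝ (Fin 2)) :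
    swapCoords x = WithLp.toLp 2 ![x 1, x 0] := by
  ext i; fin_cases i <;> simp

lemma volume_setOf_apply_zero_eq_apply_one :
    volume {x : EuclideanSpace ℝ (Fin 2) | x 0 = x 1} = 0 := by
  let d : EuclideanSpace ℝ (Fin 2) →ₗ[ℝ] ℝ := EuclideanSpace.projₗ 0 - EuclideanSpace.projₗ 1
  have hdiag : {x : EuclideanSpace ℝ (Fin 2) | x 0 = x 1} = LinearMap.ker d := by
    ext x; simp [d, sub_eq_zero]
  rw [hdiag]
  refine Measure.addHaar_submodule _ _ fun htop => ?_
  have : EuclideanSpace.single 0 (1 : ℝ) ∈ LinearMap.ker d := htop ▸ Submodule.mem_top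
  simp [d] at this

variable {μ : Measure (EuclideanSpace ℝ (Fin 2))}

lemma lintegral_sq_apply_one_eq_apply_zero (hswap : MeasurePreserving swapCoords μ μ) :
    ∫⁻ x, ENNReal.ofReal (x 1 ^ 2) ∂μ = ∫⁻ x, ENNReal.ofReal (x 0 ^ 2) ∂μ := by
  rw [← hswap.lintegral_comp (by fun_prop)]
  simp only [swapCoords_apply_one]

lemma lintegral_sq_apply_zero_eq_setLIntegral (hswap : MeasurePreserving swapCoords μ μ)
    (hdiag : μ {x | x 0 = x 1} = 0) :
    ∫⁻ x, ENNReal.ofReal (x 0 ^ 2) ∂μ =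
      ∫⁻ x in {x | x 0 ≤ x 1}, ENNReal.ofReal (x 0 ^ 2 + x 1 ^ 2) ∂μ := by
  set S : Set (EuclideanSpace ℝ (Fin 2)) := {x | x 0 ≤ x 1}
  have hS : MeasurableSet S := measurableSet_le (by fun_prop) (by fun_prop)
  have hcompl : ∫⁻ x in Sᶜ, ENNReal.ofReal (x 0 ^ 2 + x 1 ^ 2) ∂μ =
      ∫⁻ x in S, ENNReal.ofReal (x 0 ^ 2 + x 1 ^ 2) ∂μ := by
    have hpre : swapCoords ⁻¹' Sᶜ = S \ {x | x 0 = x 1} := by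
      ext x; simp [S, lt_iff_le_and_ne]
    rw [← hswap.setLIntegral_comp_preimage hS.compl (by fun_prop), hpre]
    simp only [swapCoords_apply_zero, swapCoords_apply_one]
    exact (lintegral_congr fun x => by rw [add_comm]).trans
      (setLIntegral_congr (sdiff_null_ae_eq_self hdiag))
  have htotal : ∫⁻ x, ENNReal.ofReal (x 0 ^ 2 + x 1 ^ 2) ∂μ =
      2 * ∫⁻ x, ENNReal.ofReal (x 0 ^ 2) ∂μ := by
    simp_rw [ENNReal.ofReal_add (sq_nonneg _) (sq_nonneg _)]
    rw [lintegral_add_left (by fun_prop), lintegral_sq_apply_one_eq_apply_zero hswap, two_mul]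
  rw [← lintegral_add_compl _ hS, hcompl, ← two_mul] at htotal
  exact (ENNReal.mul_right_inj two_ne_zero ENNReal.ofNat_ne_top).1 htotal.symm

end Plane

/-- Let `μ₀` be an absolutely continuous probability measure on `ℝ²` with density
`f` symmetric about the line `x₁ = x₂`, and with finite second moment. Then for dilations by
`θ, θ'` with strictly positive entries,
`W₂(μ_θ, μ_{θ'})² = [(θ₁−θ'₁)² + (θ₂−θ'₂)²] ∫_{x₂ ≥ x₁} (x₁² + x₂²) f(x) dx`. -/
theorem wasserstein_dilation_symmetric_density
    (f : EuclideanSpace ℝ (Fin 2) → ℝ) (hf : Measurable f) (hf0 : ∀ x, 0 ≤ f x)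
    (hsymm : ∀ x₁ x₂ : ℝ, f (WithLp.toLp 2 ![x₁, x₂]) = f (WithLp.toLp 2 ![x₂, x₁]))
    (hprob : IsProbabilityMeasure (volume.withDensity (fun x => ENNReal.ofReal (f x))))
    (hmom : FiniteSecondMoment (volume.withDensity (fun x => ENNReal.ofReal (f x))))
    (θ θ' : Fin 2 → ℝ) (hθ : ∀ i, 0 < θ i) (hθ' : ∀ i, 0 < θ' i) :
    (W2 (dilate θ (volume.withDensity (fun x => ENNReal.ofReal (f x))))
        (dilate θ' (volume.withDensity (fun x => ENNReal.ofReal (f x))))) ^ 2 =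
      ENNReal.ofReal (((θ 0 - θ' 0) ^ 2 + (θ 1 - θ' 1) ^ 2) *
        ∫ x in {x : EuclideanSpace ℝ (Fin 2) | x 0 ≤ x 1}, ((x 0) ^ 2 + (x 1) ^ 2) * f x) := by
  set μ₀ := volume.withDensity fun x => ENNReal.ofReal (f x)
  have hswap : MeasurePreserving swapCoords μ₀ μ₀ := by
    have hfswap :
        (fun x => ENNReal.ofReal (f x)) ∘ swapCoords = fun x => ENNReal.ofReal (f x) := by
      ext x
      rw [Function.comp_apply, swapCoords_eq_toLp, hsymm]
      congr
      ext i; fin_cases i <;> rfl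
    simpa only [hfswap] using swapCoords.measurePreserving.withDensity_comp hf.ennreal_ofReal
  have hdiag : μ₀ {x | x 0 = x 1} = 0 :=
    withDensity_absolutelyContinuous _ _ volume_setOf_apply_zero_eq_apply_one
  have hM := lintegral_sq_apply_zero_eq_setLIntegral hswap hdiag
  rw [W2_dilate_sq_eq_sum μ₀ hmom θ θ' hθ hθ', Fin.sum_univ_two,
    lintegral_sq_apply_one_eq_apply_zero hswap, ← add_mul,
    ← ENNReal.ofReal_add (sq_nonneg _) (sq_nonneg _), ENNReal.ofReal_mul (by positivity), hM,
    ofReal_setIntegral_mul_eq_setLIntegral_withDensity hf hf0 (by fun_prop)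
      (fun x => by positivity) (measurableSet_le (by fun_prop) (by fun_prop))
      (hM ▸ hmom.lintegral_sq_apply_ne_top 0)]
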